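/- Let q ∈ (0,1] and let n be a nonnegative integer. Then the triangular q-Bernstein polynomials of degree n form a partition of unity: Σ_{i+j+k=n} B^n_{ijk}(u,v) = 1 for all real u, v, where the sum is over all nonnegative integers i, j, k with i + j + k = n. -/

import Mathlib

open Finset

/-- The q-integer [r] = 1 + q + ... + q^(r-1). -/
noncomputable def qInt (q : ℝ) (r : ℕ) : ℝ := ∑ s ∈ Finset.range r, q ^ s

/-- The q-factorial [r]!. -/
noncomputable def qFact (q : ℝ) : ℕ → ℝ
  | 0 => 1
  | r + 1 => qInt q (r + 1) * qFact q r

/-- The q-binomial coefficient [i choose j]_q (zero unless i ≥ j ≥ 0). -/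
noncomputable def qBinom (q : ℝ) (i j : ℕ) : ℝ :=
  if j ≤ i then qFact q i / (qFact q j * qFact q (i - j)) else 0

/-- The q-binomial coefficient with integer indices, zero unless i ≥ j ≥ 0. -/
noncomputable def qBinomZ (q : ℝ) (i j : ℤ) : ℝ :=
  if 0 ≤ j ∧ j ≤ i then qFact q i.toNat / (qFact q j.toNat * qFact q (i - j).toNat) else 0

/-- The triangular q-Bernstein polynomial B^n_{ijk}(u,v)
    (meaningful for i + j + k = n). -/
noncomputable def triB (q : ℝ) (n i j k : ℕ) (u v : ℝ) : ℝ :=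
  qBinom q n k * (Nat.choose (i + j) i : ℝ) * u ^ i * v ^ j *
    ∏ s ∈ Finset.range k, (1 - q ^ s * u - q ^ s * v)

/-- The triangular q-Bernstein polynomial with integer indices; by convention it is
    zero whenever any of the indices is negative. -/
noncomputable def triBZ (q : ℝ) (n : ℕ) (i j k : ℤ) (u v : ℝ) : ℝ :=
  if 0 ≤ i ∧ 0 ≤ j ∧ 0 ≤ k then triB q n i.toNat j.toNat k.toNat u v else 0

/-- The classical triangular Bernstein polynomial b^n_{ijk}(u,v). -/
noncomputable def triBern (n i j k : ℕ) (u v : ℝ) : ℝ :=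
  (Nat.factorial n : ℝ) /
      ((Nat.factorial i : ℝ) * (Nat.factorial j : ℝ) * (Nat.factorial k : ℝ)) *
    u ^ i * v ^ j * (1 - u - v) ^ k

/-- The set of triples (i, j, k) of nonnegative integers with i + j + k = n. -/
def simplex (n : ℕ) : Finset (ℕ × ℕ × ℕ) :=
  (Finset.range (n + 1) ×ˢ Finset.range (n + 1) ×ˢ Finset.range (n + 1)).filter
    (fun p => p.1 + p.2.1 + p.2.2 = n)

/-!
Summing first over `i + j = m` for fixed `k`, the ordinary binomial theorem collapses the
triangular basis to `[n choose k]_q w^(n-k) ∏_{s<k} (1 - q^s w)` with `w = u + v`, since each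
factor of the product depends on `u, v` only through `u + v`. These univariate terms sum to `1`
by induction on `n`, using the q-Pascal rule `[n+1, k+1] = [n, k] + q^(k+1) [n, k+1]`: splitting
`∏_{s<k+1}` as `∏_{s<k} · (1 - q^k w)` makes the two halves of the rule cancel against each other.
-/

section QCalculus

variable {q : ℝ}

lemma qInt_succ_pos (hq : 0 ≤ q) (r : ℕ) : 0 < qInt q (r + 1) :=
  lt_of_lt_of_le one_pos <| by
    simpa [qInt] using Finset.single_le_sum (fun s _ => pow_nonneg hq s) (mem_range.2 r.succ_pos)

lemma qInt_add (q : ℝ) (a b : ℕ) : qInt q (a + b) = qInt q a + q ^ a * qInt q b := by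
  simp only [qInt, sum_range_add, mul_sum, pow_add]

lemma qFact_succ (q : ℝ) (r : ℕ) : qFact q (r + 1) = qInt q (r + 1) * qFact q r := rfl

lemma qFact_pos (hq : 0 ≤ q) (r : ℕ) : 0 < qFact q r := by
  induction r with
  | zero => exact one_pos
  | succ r ih => exact mul_pos (qInt_succ_pos hq r) ih

lemma qBinom_eq_div (q : ℝ) {n k m : ℕ} (h : n = k + m) :
    qBinom q n k = qFact q n / (qFact q k * qFact q m) := by
  rw [qBinom, if_pos (h ▸ Nat.le_add_right k m), h, Nat.add_sub_cancel_left]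

lemma qBinom_zero_right (hq : 0 ≤ q) (n : ℕ) : qBinom q n 0 = 1 := by
  rw [qBinom_eq_div q (zero_add n).symm, qFact, one_mul, div_self (qFact_pos hq n).ne']

lemma qBinom_self (hq : 0 ≤ q) (n : ℕ) : qBinom q n n = 1 := by
  rw [qBinom_eq_div q (add_zero n).symm, qFact, mul_one, div_self (qFact_pos hq n).ne']

lemma qBinom_of_lt (q : ℝ) {n k : ℕ} (h : n < k) : qBinom q n k = 0 := by
  simp [qBinom, Nat.not_le.mpr h]

lemma qBinom_succ_succ (hq : 0 ≤ q) (n k : ℕ) :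
    qBinom q (n + 1) (k + 1) = qBinom q n k + q ^ (k + 1) * qBinom q n (k + 1) := by
  rcases lt_trichotomy k n with hkn | rfl | hnk
  · obtain ⟨m, rfl⟩ : ∃ m, n = k + m + 1 := ⟨n - (k + 1), by omega⟩
    have hsplit : qInt q (k + m + 1 + 1) = qInt q (k + 1) + q ^ (k + 1) * qInt q (m + 1) := by
      rw [← qInt_add]; ring_nf
    rw [qBinom_eq_div q (show k + m + 1 + 1 = (k + 1) + (m + 1) by ring),
      qBinom_eq_div q (show k + m + 1 = k + (m + 1) by ring),
      qBinom_eq_div q (show k + m + 1 = (k + 1) + m by ring),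
      qFact_succ q (k + m + 1), qFact_succ q k, qFact_succ q m, hsplit]
    have := (qFact_pos hq k).ne'
    have := (qFact_pos hq m).ne'
    have := (qInt_succ_pos hq k).ne'
    have := (qInt_succ_pos hq m).ne'
    field_simp
  · rw [qBinom_self hq, qBinom_self hq, qBinom_of_lt q k.lt_succ_self, mul_zero, add_zero]
  · rw [qBinom_of_lt q (by omega), qBinom_of_lt q hnk, qBinom_of_lt q (by omega), mul_zero,
      add_zero]

theorem sum_antidiagonal_qBinom_mul_pow_mul_prod (hq : 0 ≤ q) (n : ℕ) (w : ℝ) :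
    ∑ p ∈ antidiagonal n, qBinom q n p.2 * w ^ p.1 * ∏ s ∈ range p.2, (1 - q ^ s * w) = 1 := by
  induction n with
  | zero => simp [qBinom_zero_right hq]
  | succ n ih =>
    set P : ℕ → ℝ := fun k => ∏ s ∈ range k, (1 - q ^ s * w)
    set g : ℕ × ℕ → ℝ := fun p => q ^ p.2 * qBinom q n p.2 * w ^ p.1 * P p.2
    have hshift : ∑ p ∈ antidiagonal n, g (p.1, p.2 + 1)
        = ∑ p ∈ antidiagonal n, g (p.1 + 1, p.2) - w ^ (n + 1) := by
      have hlast : g (n + 1, 0) = w ^ (n + 1) := by simp [g, P, qBinom_zero_right hq]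
      have hfirst : g (0, n + 1) = 0 := by simp [g, qBinom_of_lt q n.lt_succ_self]
      linarith [Nat.sum_antidiagonal_succ (n := n) (f := g),
        Nat.sum_antidiagonal_succ' (n := n) (f := g)]
    calc ∑ p ∈ antidiagonal (n + 1), qBinom q (n + 1) p.2 * w ^ p.1 * P p.2
        = w ^ (n + 1) + ∑ p ∈ antidiagonal n,
            (qBinom q n p.2 * w ^ p.1 * P (p.2 + 1) + g (p.1, p.2 + 1)) := by
          rw [Nat.sum_antidiagonal_succ']
          congr 1
          · simp [P, qBinom_zero_right hq]
          · refine sum_congr rfl fun p _ => ?_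
            simp only [g, qBinom_succ_succ hq]
            ring
      _ = ∑ p ∈ antidiagonal n, (qBinom q n p.2 * w ^ p.1 * P (p.2 + 1) + g (p.1 + 1, p.2)) := by
          rw [sum_add_distrib, sum_add_distrib, hshift]
          ring
      _ = ∑ p ∈ antidiagonal n, qBinom q n p.2 * w ^ p.1 * P p.2 := by
          refine sum_congr rfl fun p _ => ?_
          simp only [g, P, prod_range_succ]
          ring
      _ = 1 := ih

end QCalculus

lemma mem_simplex {n : ℕ} {p : ℕ × ℕ × ℕ} : p ∈ simplex n ↔ p.1 + p.2.1 + p.2.2 = n := by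
  simp only [simplex, mem_filter, mem_product, mem_range]
  omega

lemma sum_simplex_eq_sum_antidiagonal {M : Type*} [AddCommMonoid M] (n : ℕ)
    (f : ℕ → ℕ → ℕ → M) :
    ∑ p ∈ simplex n, f p.1 p.2.1 p.2.2
      = ∑ a ∈ antidiagonal n, ∑ b ∈ antidiagonal a.1, f b.1 b.2 a.2 := by
  rw [sum_sigma']
  refine sum_nbij' (fun p => ⟨(p.1 + p.2.1, p.2.2), (p.1, p.2.1)⟩) (fun x => (x.2.1, x.2.2, x.1.2))
    ?_ ?_ ?_ ?_ ?_
  · rintro ⟨i, j, k⟩ h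
    exact mem_sigma.2
      ⟨HasAntidiagonal.mem_antidiagonal.2 (mem_simplex.1 h), HasAntidiagonal.mem_antidiagonal.2 rfl⟩
  · rintro ⟨⟨m, k⟩, i, j⟩ h
    simp only [mem_sigma, HasAntidiagonal.mem_antidiagonal] at h
    simp only [mem_simplex]
    omega
  · rintro ⟨i, j, k⟩ _
    rfl
  · rintro ⟨⟨m, k⟩, i, j⟩ h
    simp only [mem_sigma, HasAntidiagonal.mem_antidiagonal] at h
    rw [← h.2]
  · rintro ⟨i, j, k⟩ _
    rfl

lemma sum_antidiagonal_triB (q : ℝ) (n m k : ℕ) (u v : ℝ) :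
    ∑ b ∈ antidiagonal m, triB q n b.1 b.2 k u v
      = qBinom q n k * (u + v) ^ m * ∏ s ∈ range k, (1 - q ^ s * (u + v)) := by
  have hprod : ∏ s ∈ range k, (1 - q ^ s * u - q ^ s * v) = ∏ s ∈ range k, (1 - q ^ s * (u + v)) :=
    prod_congr rfl fun s _ => by ring
  rw [(Commute.all u v).add_pow', mul_sum, sum_mul]
  refine sum_congr rfl fun b hb => ?_
  rw [triB, HasAntidiagonal.mem_antidiagonal.1 hb, hprod, nsmul_eq_mul]
  ring

theorem stmt4_general (q : ℝ) (hq0 : 0 < q) (n : ℕ) (u v : ℝ) :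
    ∑ p ∈ simplex n, triB q n p.1 p.2.1 p.2.2 u v = 1 := by
  rw [sum_simplex_eq_sum_antidiagonal n (fun i j k => triB q n i j k u v),
    sum_congr rfl fun a _ => sum_antidiagonal_triB q n a.1 a.2 u v]
  exact sum_antidiagonal_qBinom_mul_pow_mul_prod hq0.le n (u + v)

/-- the triangular q-Bernstein polynomials form a partition of unity. -/
theorem stmt4 (q : ℝ) (hq0 : 0 < q) (hq1 : q ≤ 1) (n : ℕ) (u v : ℝ) :
    ∑ p ∈ simplex n, triB q n p.1 p.2.1 p.2.2 u v = 1 :=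
  stmt4_general q hq0 n u v
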